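/- Let T : L^p(μ) → L^p(ν) be a surjective linear isometry, 1 ≤ p < ∞, p ≠ 2, between L^p spaces of measure spaces. If f, g ∈ L^p(μ) have disjoint supports (f·g = 0 a.e.), then Tf and Tg have disjoint supports. -/

import Mathlib

/-!
Write `φ t = t ^ (q / 2)`. By the parallelogram law, `‖a + b‖²` and `‖a - b‖²` have midpoint
`‖a‖² + ‖b‖²`, so for `q < 2` concavity and strict subadditivity of `φ` give
`‖a + b‖^q + ‖a - b‖^q ≤ 2 φ (‖a‖² + ‖b‖²) < 2‖a‖^q + 2‖b‖^q` unless `a = 0` or `b = 0`, in which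
case equality holds; for `q > 2` all inequalities reverse. Integrating, the Clarkson defect
`‖u + v‖^p + ‖u - v‖^p - 2‖u‖^p - 2‖v‖^p` of `u, v ∈ Lᵖ`, which involves norms only, vanishes
exactly when `u` and `v` have a.e. disjoint supports, and an additive isometry preserves it.
-/

open MeasureTheory ENNReal

namespace Real

theorem rpow_add_lt_add_rpow {u v r : ℝ} (hu : 0 < u) (hv : 0 < v) (hr : r < 1) :
    (u + v) ^ r < u ^ r + v ^ r := by
  have hpart : ∀ w, 0 < w → w < u + v → w * (u + v) ^ (r - 1) < w ^ r := fun w hw hlt => by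
    calc w * (u + v) ^ (r - 1) < w * w ^ (r - 1) :=
          mul_lt_mul_of_pos_left (rpow_lt_rpow_of_neg hw hlt (by linarith)) hw
      _ = w ^ r := by rw [rpow_sub_one hw.ne', mul_div_cancel₀ _ hw.ne']
  calc (u + v) ^ r = u * (u + v) ^ (r - 1) + v * (u + v) ^ (r - 1) := by
        rw [← add_mul, rpow_sub_one (by positivity), mul_div_cancel₀ _ (by positivity)]
    _ < u ^ r + v ^ r := add_lt_add (hpart u hu (by linarith)) (hpart v hv (by linarith))

theorem add_rpow_lt_rpow_add {u v r : ℝ} (hu : 0 < u) (hv : 0 < v) (hr : 1 < r) :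
    u ^ r + v ^ r < (u + v) ^ r := by
  have hpart : ∀ w, 0 < w → w < u + v → w ^ r < w * (u + v) ^ (r - 1) := fun w hw hlt => by
    calc w ^ r = w * w ^ (r - 1) := by rw [rpow_sub_one hw.ne', mul_div_cancel₀ _ hw.ne']
      _ < w * (u + v) ^ (r - 1) := by gcongr
  calc u ^ r + v ^ r < u * (u + v) ^ (r - 1) + v * (u + v) ^ (r - 1) :=
        add_lt_add (hpart u hu (by linarith)) (hpart v hv (by linarith))
    _ = (u + v) ^ r := by
        rw [← add_mul, rpow_sub_one (by positivity), mul_div_cancel₀ _ (by positivity)]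

theorem rpow_eq_sq_rpow_half {t : ℝ} (ht : 0 ≤ t) (q : ℝ) : t ^ q = (t ^ 2) ^ (q / 2) := by
  rw [← rpow_natCast_mul ht, Nat.cast_ofNat, mul_div_cancel₀ q two_ne_zero]

end Real

noncomputable def clarksonDefect {E : Type*} [SeminormedAddCommGroup E] (q : ℝ) (x y : E) : ℝ :=
  ‖x + y‖ ^ q + ‖x - y‖ ^ q - 2 * ‖x‖ ^ q - 2 * ‖y‖ ^ q

section Seminormed

variable {E F : Type*} [SeminormedAddCommGroup E] [SeminormedAddCommGroup F] {q : ℝ}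

theorem clarksonDefect_map {𝓕 : Type*} [FunLike 𝓕 E F] [AddMonoidHomClass 𝓕 E F] (T : 𝓕)
    (hT : ∀ x, ‖T x‖ = ‖x‖) (x y : E) : clarksonDefect q (T x) (T y) = clarksonDefect q x y := by
  simp only [clarksonDefect, ← map_add, ← map_sub, hT]

theorem clarksonDefect_eq_zero_of_eq_zero_or (hq : q ≠ 0) {x y : E} (h : x = 0 ∨ y = 0) :
    clarksonDefect q x y = 0 := by
  rcases h with rfl | rfl <;> simp [clarksonDefect, Real.zero_rpow hq] <;> ring

end Seminormed

section InnerProduct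

variable {E : Type*} [NormedAddCommGroup E] [InnerProductSpace ℝ E] {q : ℝ} {x y : E}

theorem half_norm_add_sq_add_half_norm_sub_sq (x y : E) :
    1 / 2 * ‖x + y‖ ^ 2 + 1 / 2 * ‖x - y‖ ^ 2 = ‖x‖ ^ 2 + ‖y‖ ^ 2 := by
  linear_combination (parallelogram_law_with_norm ℝ x y) / 2

theorem clarksonDefect_neg (hq0 : 0 ≤ q) (hq2 : q < 2) (hx : x ≠ 0) (hy : y ≠ 0) :
    clarksonDefect q x y < 0 := by
  have hmid := (Real.concaveOn_rpow (p := q / 2) (by positivity) (by linarith)).2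
    (sq_nonneg ‖x + y‖) (sq_nonneg ‖x - y‖) (by norm_num : (0 : ℝ) ≤ 1 / 2)
    (by norm_num : (0 : ℝ) ≤ 1 / 2) (by norm_num)
  have hsub : (‖x‖ ^ 2 + ‖y‖ ^ 2) ^ (q / 2) < (‖x‖ ^ 2) ^ (q / 2) + (‖y‖ ^ 2) ^ (q / 2) :=
    Real.rpow_add_lt_add_rpow (by positivity) (by positivity) (by linarith)
  simp only [smul_eq_mul, half_norm_add_sq_add_half_norm_sub_sq] at hmid
  simp only [clarksonDefect, Real.rpow_eq_sq_rpow_half (norm_nonneg _) q]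
  linarith

theorem clarksonDefect_pos (hq2 : 2 < q) (hx : x ≠ 0) (hy : y ≠ 0) :
    0 < clarksonDefect q x y := by
  have hmid := (convexOn_rpow (p := q / 2) (by linarith)).2
    (sq_nonneg ‖x + y‖) (sq_nonneg ‖x - y‖) (by norm_num : (0 : ℝ) ≤ 1 / 2)
    (by norm_num : (0 : ℝ) ≤ 1 / 2) (by norm_num)
  have hsup : (‖x‖ ^ 2) ^ (q / 2) + (‖y‖ ^ 2) ^ (q / 2) < (‖x‖ ^ 2 + ‖y‖ ^ 2) ^ (q / 2) :=
    Real.add_rpow_lt_rpow_add (by positivity) (by positivity) (by linarith)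
  simp only [smul_eq_mul, half_norm_add_sq_add_half_norm_sub_sq] at hmid
  simp only [clarksonDefect, Real.rpow_eq_sq_rpow_half (norm_nonneg _) q]
  linarith

theorem clarksonDefect_nonpos (hq0 : 0 < q) (hq2 : q < 2) (x y : E) :
    clarksonDefect q x y ≤ 0 := by
  by_cases h : x = 0 ∨ y = 0
  · exact (clarksonDefect_eq_zero_of_eq_zero_or hq0.ne' h).le
  · rw [not_or] at h
    exact (clarksonDefect_neg hq0.le hq2 h.1 h.2).le

theorem clarksonDefect_nonneg (hq2 : 2 < q) (x y : E) : 0 ≤ clarksonDefect q x y := by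
  by_cases h : x = 0 ∨ y = 0
  · exact (clarksonDefect_eq_zero_of_eq_zero_or (by linarith) h).ge
  · rw [not_or] at h
    exact (clarksonDefect_pos hq2 h.1 h.2).le

theorem clarksonDefect_eq_zero_iff (hq0 : 0 < q) (hq2 : q ≠ 2) :
    clarksonDefect q x y = 0 ↔ x = 0 ∨ y = 0 := by
  refine ⟨fun h => ?_, clarksonDefect_eq_zero_of_eq_zero_or hq0.ne'⟩
  by_contra! hxy
  rcases hq2.lt_or_gt with hq2 | hq2
  · exact (clarksonDefect_neg hq0.le hq2 hxy.1 hxy.2).ne h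
  · exact (clarksonDefect_pos hq2 hxy.1 hxy.2).ne' h

end InnerProduct

namespace MeasureTheory

variable {α E : Type*} [MeasurableSpace α] {μ : Measure α} [NormedAddCommGroup E] {p : ℝ≥0∞}

theorem MemLp.toReal_eLpNorm_rpow_eq_integral (hp0 : p ≠ 0) (hp : p ≠ ∞) {f : α → E}
    (hf : MemLp f p μ) : (eLpNorm f p μ).toReal ^ p.toReal = ∫ x, ‖f x‖ ^ p.toReal ∂μ := by
  have hq : 0 < p.toReal := ENNReal.toReal_pos hp0 hp
  rw [hf.eLpNorm_eq_integral_rpow_norm hp0 hp, ENNReal.toReal_ofReal (by positivity),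
    ← Real.rpow_mul (integral_nonneg fun x => by positivity), inv_mul_cancel₀ hq.ne',
    Real.rpow_one]

namespace Lp

variable [Fact (1 ≤ p)]

theorem integrable_clarksonDefect (hp : p ≠ ∞) (u v : Lp E p μ) :
    Integrable (fun x => clarksonDefect p.toReal (u x) (v x)) μ := by
  have hp0 : p ≠ 0 := (one_pos.trans_le Fact.out).ne'
  have hu := Lp.memLp u
  have hv := Lp.memLp v
  exact ((((hu.add hv).integrable_norm_rpow hp0 hp).add
    ((hu.sub hv).integrable_norm_rpow hp0 hp)).sub
    ((hu.integrable_norm_rpow hp0 hp).const_mul 2)).sub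
    ((hv.integrable_norm_rpow hp0 hp).const_mul 2)

theorem clarksonDefect_eq_integral (hp : p ≠ ∞) (u v : Lp E p μ) :
    clarksonDefect p.toReal u v = ∫ x, clarksonDefect p.toReal (u x) (v x) ∂μ := by
  have hp0 : p ≠ 0 := (one_pos.trans_le Fact.out).ne'
  have hu := Lp.memLp u
  have hv := Lp.memLp v
  have hnorm : ∀ {w : Lp E p μ} {f : α → E}, MemLp f p μ → w =ᵐ[μ] f →
      ‖w‖ ^ p.toReal = ∫ x, ‖f x‖ ^ p.toReal ∂μ := fun hf hw => by
    rw [Lp.norm_def, eLpNorm_congr_ae hw, hf.toReal_eLpNorm_rpow_eq_integral hp0 hp]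
  have iA := (hu.add hv).integrable_norm_rpow hp0 hp
  have iB := (hu.sub hv).integrable_norm_rpow hp0 hp
  have iU := (hu.integrable_norm_rpow hp0 hp).const_mul 2
  have iV := (hv.integrable_norm_rpow hp0 hp).const_mul 2
  rw [clarksonDefect, hnorm (hu.add hv) (Lp.coeFn_add u v), hnorm (hu.sub hv) (Lp.coeFn_sub u v),
    hnorm hu .rfl, hnorm hv .rfl, ← integral_const_mul, ← integral_const_mul, ← integral_add iA iB,
    ← integral_sub (iA.fun_add iB) iU, ← integral_sub ((iA.fun_add iB).sub' iU) iV]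
  rfl

theorem clarksonDefect_eq_zero_iff [InnerProductSpace ℝ E] (hp : p ≠ ∞) (hp2 : p.toReal ≠ 2)
    {u v : Lp E p μ} : clarksonDefect p.toReal u v = 0 ↔ ∀ᵐ x ∂μ, u x = 0 ∨ v x = 0 := by
  have hq : 0 < p.toReal := ENNReal.toReal_pos (one_pos.trans_le Fact.out).ne' hp
  have hint := integrable_clarksonDefect hp u v
  simp_rw [← _root_.clarksonDefect_eq_zero_iff hq hp2]
  rw [clarksonDefect_eq_integral hp]
  refine ⟨fun h => ?_, integral_eq_zero_of_ae⟩
  rcases hp2.lt_or_gt with hp2 | hp2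
  · have hneg := (integral_eq_zero_iff_of_nonneg
      (fun x => neg_nonneg.2 (clarksonDefect_nonpos hq hp2 _ _)) hint.neg).1
      (by rw [integral_neg, h, neg_zero])
    filter_upwards [hneg] with x hx using neg_eq_zero.1 hx
  · exact (integral_eq_zero_iff_of_nonneg (fun x => clarksonDefect_nonneg hp2 _ _) hint).1 h

end Lp

end MeasureTheory

/-- A surjective linear isometry of `L^p` spaces, `1 ≤ p < ∞`, `p ≠ 2`,
preserves disjointness of supports. -/
theorem lp_isometry_preserves_disjoint_supports
    {Ω₁ Ω₂ : Type*} [MeasurableSpace Ω₁] [MeasurableSpace Ω₂]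
    (μ : Measure Ω₁) (ν : Measure Ω₂)
    (p : ℝ≥0∞) [Fact (1 ≤ p)] (hp_top : p ≠ ∞) (hp2 : p.toReal ≠ 2)
    (T : Lp ℂ p μ ≃ₗᵢ[ℂ] Lp ℂ p ν)
    (f g : Lp ℂ p μ)
    (hfg : ∀ᵐ ω ∂μ, (f : Ω₁ → ℂ) ω * (g : Ω₁ → ℂ) ω = 0) :
    ∀ᵐ ω ∂ν, (T f : Ω₂ → ℂ) ω * (T g : Ω₂ → ℂ) ω = 0 := by
  simp only [mul_eq_zero] at hfg ⊢
  rw [← Lp.clarksonDefect_eq_zero_iff hp_top hp2] at hfg ⊢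
  rwa [clarksonDefect_map T T.norm_map]
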